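/- Let φ be an (anti)morphic involution induced by an involutive letter map t : Σ → Σ, and let L ⊆ Σ* be a nonempty language. For all n, m ≥ 1, L^{⇄φ(n)} ⇄φ L^{⇄φ(m)} = L^{⇄φ(n+m)}. -/
import Mathlib


/-- The strong φ-bi-catenation of two words. -/
def biCat {α : Type*} (φ : List α → List α) (u v : List α) : Set (List α) :=
  {u ++ v, u ++ φ v, φ u ++ v, φ u ++ φ v, v ++ u, v ++ φ u, φ v ++ u, φ v ++ φ u}

/-- `φ` is the morphic or the antimorphic involution induced by the involutive
letter map `t`. -/
def IsAminv {α : Type*} (t : α → α) (φ : List α → List α) : Prop :=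
  (∀ a, t (t a) = a) ∧
    ((∀ u : List α, φ u = u.map t) ∨ (∀ u : List α, φ u = (u.map t).reverse))

/-- Concatenation product of two languages. -/
def setProd {α : Type*} (A B : Set (List α)) : Set (List α) :=
  Set.image2 (· ++ ·) A B

/-- `L_φ = L ∪ φ(L)`. -/
def lphi {α : Type*} (φ : List α → List α) (L : Set (List α)) : Set (List α) :=
  L ∪ φ '' L

/-- Strong φ-bi-catenation of two languages. -/
def biCatLang {α : Type*} (φ : List α → List α) (A B : Set (List α)) :
    Set (List α) := ⋃ u ∈ A, ⋃ v ∈ B, biCat φ u v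

/-- Iterated ⇄φ-powers of a language: `L^{⇄φ(1)} = L_φ`,
`L^{⇄φ(n+1)} = L^{⇄φ(n)} ⇄φ L`. -/
def biPow {α : Type*} (φ : List α → List α) (L : Set (List α)) : ℕ → Set (List α)
  | 0 => {[]}
  | 1 => lphi φ L
  | n + 2 => biCatLang φ (biPow φ L (n + 1)) L

section Aux

variable {α : Type*} {t : α → α} {φ : List α → List α}

lemma phi_nil (hφ : IsAminv t φ) : φ [] = [] := by
  rcases hφ.2 with h | h <;> simp [h]

lemma phi_phi (hφ : IsAminv t φ) (u : List α) : φ (φ u) = u := by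
  rcases hφ.2 with h | h <;>
    simp [h, List.map_map, Function.comp_def, hφ.1]

lemma phi_append (hφ : IsAminv t φ) (u v : List α) :
    φ (u ++ v) = φ u ++ φ v ∨ φ (u ++ v) = φ v ++ φ u := by
  rcases hφ.2 with h | h
  · left; simp [h]
  · right; simp [h]

/-- Ordinary concatenation power of a language. -/
def spow (M : Set (List α)) : ℕ → Set (List α)
  | 0 => {[]}
  | n + 1 => setProd (spow M n) M

lemma setProd_assoc (A B C : Set (List α)) :
    setProd (setProd A B) C = setProd A (setProd B C) :=
  Set.image2_assoc (fun _ _ _ => List.append_assoc _ _ _)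

lemma setProd_nil_left (M : Set (List α)) : setProd {[]} M = M := by
  simp [setProd]

lemma setProd_nil_right (M : Set (List α)) : setProd M {[]} = M := by
  simp [setProd]

lemma spow_one (M : Set (List α)) : spow M 1 = M := by
  show setProd (spow M 0) M = M
  rw [show spow M 0 = {[]} from rfl, setProd_nil_left]

lemma spow_comm (M : Set (List α)) (n : ℕ) :
    setProd M (spow M n) = spow M (n + 1) := by
  induction n with
  | zero =>
      rw [show spow M 0 = {[]} from rfl, setProd_nil_right, spow_one]
  | succ n ih =>
      show setProd M (setProd (spow M n) M) = setProd (spow M (n + 1)) M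
      rw [← setProd_assoc, ih]

lemma spow_add (M : Set (List α)) (n m : ℕ) :
    setProd (spow M n) (spow M m) = spow M (n + m) := by
  induction m with
  | zero => rw [show spow M 0 = {[]} from rfl, setProd_nil_right]; rfl
  | succ m ih =>
      show setProd (spow M n) (setProd (spow M m) M) = setProd (spow M (n + m)) M
      rw [← setProd_assoc, ih]

lemma spow_closed (hφ : IsAminv t φ) {M : Set (List α)}
    (hM : ∀ x ∈ M, φ x ∈ M) (n : ℕ) : ∀ x ∈ spow M n, φ x ∈ spow M n := by
  induction n with
  | zero =>
      intro x hx
      rw [show x = [] from hx]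
      rw [phi_nil hφ]; exact rfl
  | succ n ih =>
      rintro x ⟨a, ha, b, hb, rfl⟩
      rcases phi_append hφ a b with h | h
      · rw [show ((· ++ ·) a b : List α) = a ++ b from rfl, h]
        exact ⟨φ a, ih a ha, φ b, hM b hb, rfl⟩
      · rw [show ((· ++ ·) a b : List α) = a ++ b from rfl, h]
        have : φ b ++ φ a ∈ setProd M (spow M n) :=
          ⟨φ b, hM b hb, φ a, ih a ha, rfl⟩
        rwa [spow_comm] at this

lemma mem_biCatLang {A B : Set (List α)} {x : List α} :
    x ∈ biCatLang φ A B ↔ ∃ u ∈ A, ∃ v ∈ B, x ∈ biCat φ u v := by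
  simp [biCatLang]

lemma biCat_phi_right (hφ : IsAminv t φ) (u v : List α) :
    biCat φ u (φ v) = biCat φ u v := by
  ext x
  simp only [biCat, Set.mem_insert_iff, Set.mem_singleton_iff, phi_phi hφ]
  tauto

lemma biCatLang_lphi_right (hφ : IsAminv t φ) (A L : Set (List α)) :
    biCatLang φ A (lphi φ L) = biCatLang φ A L := by
  apply Set.Subset.antisymm
  · intro x hx
    rw [mem_biCatLang] at hx ⊢
    obtain ⟨u, hu, v, hv, hx⟩ := hx
    rcases hv with hv | ⟨w, hw, rfl⟩
    · exact ⟨u, hu, v, hv, hx⟩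
    · exact ⟨u, hu, w, hw, by rwa [biCat_phi_right hφ] at hx⟩
  · intro x hx
    rw [mem_biCatLang] at hx ⊢
    obtain ⟨u, hu, v, hv, hx⟩ := hx
    exact ⟨u, hu, v, Or.inl hv, hx⟩

lemma biCatLang_closed (hφ : IsAminv t φ) {A B : Set (List α)}
    (hA : ∀ x ∈ A, φ x ∈ A) (hB : ∀ x ∈ B, φ x ∈ B) :
    biCatLang φ A B = setProd A B ∪ setProd B A := by
  ext x
  rw [mem_biCatLang]
  constructor
  · rintro ⟨u, hu, v, hv, hx⟩
    simp only [biCat, Set.mem_insert_iff, Set.mem_singleton_iff] at hx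
    rcases hx with rfl | rfl | rfl | rfl | rfl | rfl | rfl | rfl
    · exact Or.inl ⟨u, hu, v, hv, rfl⟩
    · exact Or.inl ⟨u, hu, φ v, hB v hv, rfl⟩
    · exact Or.inl ⟨φ u, hA u hu, v, hv, rfl⟩
    · exact Or.inl ⟨φ u, hA u hu, φ v, hB v hv, rfl⟩
    · exact Or.inr ⟨v, hv, u, hu, rfl⟩
    · exact Or.inr ⟨v, hv, φ u, hA u hu, rfl⟩
    · exact Or.inr ⟨φ v, hB v hv, u, hu, rfl⟩
    · exact Or.inr ⟨φ v, hB v hv, φ u, hA u hu, rfl⟩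
  · rintro (⟨a, ha, b, hb, rfl⟩ | ⟨a, ha, b, hb, rfl⟩)
    · exact ⟨a, ha, b, hb, by simp [biCat]⟩
    · exact ⟨b, hb, a, ha, by simp [biCat]⟩

lemma lphi_closed (hφ : IsAminv t φ) (L : Set (List α)) :
    ∀ x ∈ lphi φ L, φ x ∈ lphi φ L := by
  rintro x (hx | ⟨y, hy, rfl⟩)
  · exact Or.inr ⟨x, hx, rfl⟩
  · exact Or.inl (by rw [phi_phi hφ]; exact hy)

lemma biCatLang_spow (hφ : IsAminv t φ) {M : Set (List α)}
    (hM : ∀ x ∈ M, φ x ∈ M) (n m : ℕ) :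
    biCatLang φ (spow M n) (spow M m) = spow M (n + m) := by
  rw [biCatLang_closed hφ (spow_closed hφ hM n) (spow_closed hφ hM m),
    spow_add, spow_add, Nat.add_comm m n, Set.union_self]

lemma biCatLang_spow_one (hφ : IsAminv t φ) {M : Set (List α)}
    (hM : ∀ x ∈ M, φ x ∈ M) (n : ℕ) :
    biCatLang φ (spow M n) M = spow M (n + 1) := by
  have h := biCatLang_spow hφ hM n 1
  rwa [spow_one] at h

lemma biPow_eq_spow (hφ : IsAminv t φ) (L : Set (List α)) (n : ℕ) :
    biPow φ L (n + 1) = spow (lphi φ L) (n + 1) := by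
  induction n with
  | zero => rw [show biPow φ L 1 = lphi φ L from rfl, spow_one]
  | succ n ih =>
      show biCatLang φ (biPow φ L (n + 1)) L = _
      rw [ih, ← biCatLang_lphi_right hφ]
      exact biCatLang_spow_one hφ (lphi_closed hφ L) (n + 1)

end Aux

/-- `L^{⇄φ(n)} ⇄φ L^{⇄φ(m)} = L^{⇄φ(n+m)}` for `n, m ≥ 1`. -/
theorem biPow_add {α : Type*} (t : α → α) (φ : List α → List α) (hφ : IsAminv t φ)
    (L : Set (List α)) (hL : L.Nonempty) (n m : ℕ) (hn : 1 ≤ n) (hm : 1 ≤ m) :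
    biCatLang φ (biPow φ L n) (biPow φ L m) = biPow φ L (n + m) := by
  obtain ⟨n, rfl⟩ : ∃ k, n = k + 1 := ⟨n - 1, by omega⟩
  obtain ⟨m, rfl⟩ : ∃ k, m = k + 1 := ⟨m - 1, by omega⟩
  rw [biPow_eq_spow hφ L n, biPow_eq_spow hφ L m,
    show n + 1 + (m + 1) = (n + m + 1) + 1 by omega, biPow_eq_spow hφ L (n + m + 1),
    biCatLang_spow hφ (lphi_closed hφ L),
    show n + 1 + (m + 1) = n + m + 1 + 1 from by omega]
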